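/- arXiv:1306.1149 — 9 statements merged into one kernel-verified Lean document; each statement's English description precedes it below -/
import Mathlib

section
/- Let $r, p_{\max}$ be positive reals. For any $t$ and reals $p_1,\ldots,p_t$ with $0 \le p_i \le p_{\max}$ for all $i$ and $\sum_{i=1}^t p_i \le r$, we have $1 - \prod_{i=1}^t (1-p_i) \le 1 - (1-p_{\max})^{r/p_{\max}}$ (assuming $p_{\max} \le 1$). -/
/-! By Bernoulli's inequality for exponents in `[0, 1]` (concavity of `u ↦ (1 - a) ^ u`),
each factor satisfies `(1 - a) ^ (pᵢ / a) ≤ 1 - pᵢ` when `0 ≤ pᵢ ≤ a ≤ 1`. Multiplying gives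
`(1 - a) ^ (∑ pᵢ / a) ≤ ∏ (1 - pᵢ)`, and since the base lies in `[0, 1]`, enlarging the
exponent from `∑ pᵢ / a` to `r / a` only decreases the left-hand side. -/

theorem Real.one_sub_rpow_div_le_one_sub {a x : ℝ} (ha : 0 < a) (ha1 : a ≤ 1)
    (hx0 : 0 ≤ x) (hxa : x ≤ a) : (1 - a) ^ (x / a) ≤ 1 - x := by
  have h := rpow_one_add_le_one_add_mul_self (s := -a) (by linarith)
    (div_nonneg hx0 ha.le) ((div_le_one ha).mpr hxa)
  rwa [← sub_eq_add_neg, mul_neg, div_mul_cancel₀ x ha.ne', ← sub_eq_add_neg] at h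

theorem Real.one_sub_rpow_sum_div_le_prod_one_sub {ι : Type*} (s : Finset ι) {p : ι → ℝ}
    {a : ℝ} (ha : 0 < a) (ha1 : a ≤ 1) (h0 : ∀ i ∈ s, 0 ≤ p i) (h1 : ∀ i ∈ s, p i ≤ a) :
    (1 - a) ^ (∑ i ∈ s, p i / a) ≤ ∏ i ∈ s, (1 - p i) := by
  rw [Real.rpow_sum_of_nonneg (by linarith) fun i hi => div_nonneg (h0 i hi) ha.le]
  exact Finset.prod_le_prod (fun i _ => by positivity)
    fun i hi => one_sub_rpow_div_le_one_sub ha ha1 (h0 i hi) (h1 i hi)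

theorem stmt1_general (r pmax : ℝ) (hp : 0 < pmax) (hp1 : pmax ≤ 1)
    (t : ℕ) (p : Fin t → ℝ) (h0 : ∀ i, 0 ≤ p i) (h1 : ∀ i, p i ≤ pmax)
    (hsum : ∑ i, p i ≤ r) :
    1 - ∏ i, (1 - p i) ≤ 1 - (1 - pmax) ^ (r / pmax) := by
  have hexp : ∑ i, p i / pmax ≤ r / pmax := by
    rw [← Finset.sum_div]
    gcongr
  have key : (1 - pmax) ^ (r / pmax) ≤ ∏ i, (1 - p i) :=
    calc (1 - pmax) ^ (r / pmax)
        ≤ (1 - pmax) ^ (∑ i, p i / pmax) :=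
          Real.rpow_le_rpow_of_exponent_ge' (by linarith) (by linarith)
            (Finset.sum_nonneg fun i _ => div_nonneg (h0 i) hp.le) hexp
      _ ≤ ∏ i, (1 - p i) :=
          Real.one_sub_rpow_sum_div_le_prod_one_sub _ hp hp1 (fun i _ => h0 i) fun i _ => h1 i
  linarith

/-- Technical lemma of Bansal et al.: if `0 ≤ pᵢ ≤ pmax ≤ 1` and `∑ pᵢ ≤ r`, then
`1 - ∏ (1 - pᵢ) ≤ 1 - (1 - pmax) ^ (r / pmax)` (real exponent). -/
theorem stmt1 (r pmax : ℝ) (hr : 0 < r) (hp : 0 < pmax) (hp1 : pmax ≤ 1)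
    (t : ℕ) (p : Fin t → ℝ) (h0 : ∀ i, 0 ≤ p i) (h1 : ∀ i, p i ≤ pmax)
    (hsum : ∑ i, p i ≤ r) :
    1 - ∏ i, (1 - p i) ≤ 1 - (1 - pmax) ^ (r / pmax) :=
  stmt1_general r pmax hp hp1 t p h0 h1 hsum
end

section
/- For every real $\mu_3 \in [0, t/6]$ with $t > 0$, we have $1 - \left(1 - \frac{t/6}{t/2 - \mu_3}\right)^{(t/3 - \mu_3)/(t/6)} \le 5/9$, with the maximum of the left-hand side over $\mu_3 \in [0,t/6]$ attained at $\mu_3 = 0$. -/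
open Real

/-! Writing `u = (t/3 - μ₃)/(t/6) ∈ [1, 2]`, the power is `(u/(u+1))^u`, which equals `4/9` at
`u = 2` (i.e. `μ₃ = 0`). Splitting `b^u = b^2 / b^(2-u)` and bounding `b^(2-u)` by Bernoulli's
inequality reduces `4/9 ≤ (u/(u+1))^u` to `(u - 2)^2 ≥ 0`. -/

lemma sq_div_one_add_mul_le_rpow_two_sub {b s : ℝ} (hb : 0 < b) (hs0 : 0 ≤ s) (hs1 : s ≤ 1) :
    b ^ 2 / (1 + s * (b - 1)) ≤ b ^ (2 - s) := by
  have hbern : b ^ s ≤ 1 + s * (b - 1) := by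
    simpa using rpow_one_add_le_one_add_mul_self (s := b - 1) (by linarith) hs0 hs1
  calc b ^ 2 / (1 + s * (b - 1)) ≤ b ^ 2 / b ^ s :=
        div_le_div_of_nonneg_left (by positivity) (by positivity) hbern
    _ = b ^ (2 - s) := by rw [rpow_sub hb, rpow_two]

lemma four_ninths_le_rpow_div_add_one {u : ℝ} (hu1 : 1 ≤ u) (hu2 : u ≤ 2) :
    (4 : ℝ) / 9 ≤ (u / (u + 1)) ^ u := by
  have hb : 0 < u / (u + 1) := by positivity
  have hbern := sq_div_one_add_mul_le_rpow_two_sub hb (s := 2 - u) (by linarith) (by linarith)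
  rw [sub_sub_cancel] at hbern
  have hden : 1 + (2 - u) * (u / (u + 1) - 1) = (2 * u - 1) / (u + 1) := by
    field_simp; ring
  refine le_trans ?_ hbern
  have h2u : 0 < 2 * u - 1 := by linarith
  rw [hden, div_pow, div_div_div_eq, le_div_iff₀ (by positivity)]
  nlinarith [sq_nonneg (u - 2)]

lemma one_sub_div_eq_div_add_one {t μ : ℝ} (ht : 0 < t) (hμ : μ < t / 2) :
    1 - (t / 6) / (t / 2 - μ) = (t / 3 - μ) / (t / 6) / ((t / 3 - μ) / (t / 6) + 1) := by
  have hne : t / 2 - μ ≠ 0 := by linarith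
  have hu : (t / 3 - μ) / (t / 6) + 1 = (t / 2 - μ) / (t / 6) := by field_simp; ring
  rw [hu, div_div_div_cancel_right₀ (by positivity), eq_div_iff hne, sub_mul,
    div_mul_cancel₀ _ hne]
  ring

/-- Case `k = 2` bound: for `μ₃ ∈ [0, t/6]`, the quantity
`1 - (1 - (t/6)/(t/2 - μ₃)) ^ ((t/3 - μ₃)/(t/6))` is at most `5/9`, and is at most
its value at `μ₃ = 0`. -/
theorem stmt3 (t μ₃ : ℝ) (ht : 0 < t) (h0 : 0 ≤ μ₃) (h1 : μ₃ ≤ t / 6) :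
    1 - (1 - (t / 6) / (t / 2 - μ₃)) ^ ((t / 3 - μ₃) / (t / 6)) ≤ 5 / 9 ∧
    1 - (1 - (t / 6) / (t / 2 - μ₃)) ^ ((t / 3 - μ₃) / (t / 6)) ≤
      1 - (1 - (t / 6) / (t / 2 - (0 : ℝ))) ^ ((t / 3 - (0 : ℝ)) / (t / 6)) := by
  have ht6 : 0 < t / 6 := by positivity
  have hlow : (4 : ℝ) / 9 ≤ (1 - (t / 6) / (t / 2 - μ₃)) ^ ((t / 3 - μ₃) / (t / 6)) := by
    rw [one_sub_div_eq_div_add_one ht (by linarith)]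
    exact four_ninths_le_rpow_div_add_one (by rw [le_div_iff₀ ht6]; linarith)
      (by rw [div_le_iff₀ ht6]; linarith)
  have hzero : (1 - (t / 6) / (t / 2 - (0 : ℝ))) ^ ((t / 3 - (0 : ℝ)) / (t / 6)) = 4 / 9 := by
    have hu : (t / 3 - (0 : ℝ)) / (t / 6) = 2 := by field_simp; ring
    rw [one_sub_div_eq_div_add_one ht (by linarith), hu, rpow_two]
    norm_num
  exact ⟨by linarith, by linarith⟩
end

section
/- In the two-job instance with budget $B = N+1$ (job 1 takes time $N+1$ with probability $1-1/N$ yielding reward 1, and time 1 with probability $1/N$ yielding reward 0; job 2 deterministically takes time 1 and yields reward 1), every adaptive non-preemptive scheduling policy obtains expected reward at most 1, while the LP relaxation $(\mathtt{LP'})$ has optimal value at least $2 - 1/N$. Hence the projection gap of $(\mathtt{LP'})$ is at least $2 - 1/N$ for every integer $N \ge 2$. -/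
open Finset

namespace S6

/-- Survival function of job 1: it takes time `N+1` w.p. `1 - 1/N` (reward 1) and
time `1` w.p. `1/N` (reward 0). `pr1 N s = Pr[S₁ > s]`. -/
noncomputable def pr1 (N s : ℕ) : ℝ := if s = 0 then 1 else if s ≤ N then 1 - 1 / N else 0

/-- Survival function of job 2: it deterministically takes time 1. `pr2 s = Pr[S₂ > s]`. -/
def pr2 (s : ℕ) : ℝ := if s = 0 then 1 else 0

/-- Feasibility for the LP relaxation `(LP')` on this two-job instance with budget
`B = N+1`: nonnegativity, `∑ₜ x i t ≤ 1`, and the capacity constraints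
`∑ᵢ ∑_{t' ≤ t} x i t' · Pr[Sᵢ > t - t'] ≤ 1`. -/
def Feasible (N : ℕ) (x : Fin 2 → ℕ → ℝ) : Prop :=
  (∀ i t, 0 ≤ x i t) ∧
  (∀ i, ∑ t ∈ Icc 1 (N + 1), x i t ≤ 1) ∧
  (∀ t ∈ Icc 1 (N + 1),
    ∑ t' ∈ Icc 1 t, (x 0 t' * pr1 N (t - t') + x 1 t' * pr2 (t - t')) ≤ 1)

/-- LP objective `∑_{i,t} ER_{i,t} x_{i,t}`: job 1 started at time `t` yields expected
reward `1 - 1/N` iff `t = 1` (it must complete by time `B = N+1`), and job 2 yields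
reward 1 whenever it is started within the budget. -/
noncomputable def lpObj (N : ℕ) (x : Fin 2 → ℕ → ℝ) : ℝ :=
  (1 - 1 / N) * x 0 1 + ∑ t ∈ Icc 1 (N + 1), x 1 t

/-- An adaptive non-preemptive policy for the two-job instance: choose which job to
start first and the (time ≥ 1) at which to start it; the start time of the second
job may depend on the realized processing time `s` of the first job, but must come
after the first job finishes. (Starting a job after the budget models not starting
it at all.) -/
structure Policy (N : ℕ) where
  first : Fin 2
  start1 : ℕ
  start2 : ℕ → ℕ
  h1 : 1 ≤ start1
  h2 : ∀ s, start1 + s ≤ start2 s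

/-- Realized reward of a policy when job 1 has realized processing time `s0 ∈ {1, N+1}`:
job 1 pays 1 iff its realized time is `N+1` and it completes by time `N+1`;
job 2 pays 1 iff it completes by time `N+1`. -/
def reward (N : ℕ) (P : Policy N) (s0 : ℕ) : ℝ :=
  (if s0 = N + 1 ∧ (if P.first = 0 then P.start1 else P.start2 1) + s0 ≤ N + 2
    then (1 : ℝ) else 0) +
  (if (if P.first = 0 then P.start2 s0 else P.start1) + 1 ≤ N + 2 then (1 : ℝ) else 0)

/-- Expected reward of a policy: job 1 takes time `1` w.p. `1/N` and `N+1` w.p. `1-1/N`. -/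
noncomputable def expReward (N : ℕ) (P : Policy N) : ℝ :=
  (1 / N) * reward N P 1 + (1 - 1 / N) * reward N P (N + 1)

end S6


namespace S6

theorem one_sub_one_div_nonneg (N : ℕ) : (0 : ℝ) ≤ 1 - 1 / N := by
  rw [sub_nonneg, one_div]
  exact Nat.cast_inv_le_one N

section Policies

variable {N : ℕ} (P : Policy N)

/-- The first job starts at time `≥ 1`; the second then starts at time `≥ 2`, or `≥ N + 2`
after the long realization of job 1, so the two never both complete by time `N + 1`. -/
theorem reward_le_one (s0 : ℕ) : reward N P s0 ≤ 1 := by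
  have hfirst := P.h1
  have hsecond := P.h2 s0
  have hsecondAfterShort := P.h2 1
  unfold reward
  split_ifs <;> grind

theorem expReward_le_one : expReward N P ≤ 1 := by
  have hshort := mul_le_mul_of_nonneg_left (reward_le_one P 1) (by positivity : (0 : ℝ) ≤ 1 / N)
  have hlong := mul_le_mul_of_nonneg_left (reward_le_one P (N + 1)) (one_sub_one_div_nonneg N)
  unfold expReward
  linarith

end Policies

section LPSolution

/-- Start job 1 at time 1 with certainty and job 2 at each of the times `2, …, N+1` with
probability `1/N`: at every time step job 2 fills exactly the capacity that job 1 has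
released with probability `1/N`. -/
noncomputable def lpSolution (N : ℕ) : Fin 2 → ℕ → ℝ :=
  ![fun t => if t = 1 then 1 else 0, fun t => if 2 ≤ t then 1 / N else 0]

variable {N : ℕ}

theorem sum_lpSolution_zero : ∑ t ∈ Icc 1 (N + 1), lpSolution N 0 t = 1 := by
  simp [lpSolution]

theorem sum_lpSolution_one (hN : N ≠ 0) : ∑ t ∈ Icc 1 (N + 1), lpSolution N 1 t = 1 := by
  have hfilter : {t ∈ Icc 1 (N + 1) | 2 ≤ t} = Icc 2 (N + 1) := by
    ext t
    simp only [mem_filter, mem_Icc]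
    omega
  simp only [lpSolution, Matrix.cons_val_one, Matrix.cons_val_zero]
  rw [← sum_filter, hfilter, sum_const, Nat.card_Icc, show N + 1 + 1 - 2 = N by omega,
    nsmul_eq_mul]
  field_simp

theorem load_lpSolution {t : ℕ} (ht : t ∈ Icc 1 (N + 1)) :
    ∑ t' ∈ Icc 1 t, (lpSolution N 0 t' * pr1 N (t - t') + lpSolution N 1 t' * pr2 (t - t'))
      = 1 := by
  obtain ⟨ht1, htN⟩ := mem_Icc.mp ht
  have hjob1 : ∑ t' ∈ Icc 1 t, lpSolution N 0 t' * pr1 N (t - t') = pr1 N (t - 1) := by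
    simp [lpSolution, ite_mul, ht1]
  have hjob2 : ∑ t' ∈ Icc 1 t, lpSolution N 1 t' * pr2 (t - t') = lpSolution N 1 t := by
    rw [sum_eq_single_of_mem t (mem_Icc.mpr ⟨ht1, le_rfl⟩)]
    · simp [pr2]
    · intro t' ht' hne
      have hgap : t - t' ≠ 0 := by
        have := (mem_Icc.mp ht').2
        omega
      simp [pr2, hgap]
  rw [sum_add_distrib, hjob1, hjob2]
  rcases eq_or_lt_of_le ht1 with rfl | ht2
  · simp [lpSolution, pr1]
  · simp [lpSolution, pr1, show 2 ≤ t by omega, show t - 1 ≠ 0 by omega, show t - 1 ≤ N by omega]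

theorem feasible_lpSolution (hN : N ≠ 0) : Feasible N (lpSolution N) := by
  refine ⟨?_, ?_, fun t ht => (load_lpSolution ht).le⟩
  · intro i t
    fin_cases i <;>
      simp only [lpSolution, Fin.zero_eta, Fin.mk_one, Matrix.cons_val_zero,
        Matrix.cons_val_one] <;>
      split_ifs <;> positivity
  · intro i
    fin_cases i
    · exact (sum_lpSolution_zero).le
    · exact (sum_lpSolution_one hN).le

theorem lpObj_lpSolution (hN : N ≠ 0) : lpObj N (lpSolution N) = 2 - 1 / N := by
  rw [lpObj, sum_lpSolution_one hN]
  simp only [lpSolution, Matrix.cons_val_zero, if_pos]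
  ring

end LPSolution

end S6

/-- In the two-job instance with budget `B = N+1`, the LP relaxation `(LP')` attains
value at least `2 - 1/N`, while every adaptive non-preemptive policy obtains expected
reward at most `1`; hence the projection gap of `(LP')` is at least `2 - 1/N`. -/
theorem stmt6 (N : ℕ) (hN : 2 ≤ N) :
    (∃ x : Fin 2 → ℕ → ℝ, S6.Feasible N x ∧ 2 - 1 / N ≤ S6.lpObj N x) ∧
    (∀ P : S6.Policy N, S6.expReward N P ≤ 1) := by
  have hN0 : N ≠ 0 := by omega
  exact ⟨⟨S6.lpSolution N, S6.feasible_lpSolution hN0, (S6.lpObj_lpSolution hN0).ge⟩,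
    S6.expReward_le_one⟩
end

section
/- Let $\{x^a_{u,t}\}$ be (the $x$-part of) a feasible solution to $(\mathtt{PolyLP})$. Then there exist values $q_{v,b,t',u,a,t} \in [0,1]$, defined for $(v,b) \in \mathrm{Par}(u)$, $a \in A$, $t' < t$ with $x^a_{u,t}>0$ and $x^b_{v,t'}>0$, such that: (i) $\sum_{a}\sum_{t > t'} q_{v,b,t',u,a,t} \le 1$ for each $(v,b) \in \mathrm{Par}(u)$ and $t'$ with $x^b_{v,t'}>0$; and (ii) $\sum_{(v,b)\in\mathrm{Par}(u)} \big(\sum_{t'<t} x^b_{v,t'} q_{v,b,t',u,a,t}\big) p^b_{v,u} = x^a_{u,t}$ for each non-root $u$, action $a$, and time $t$ with $x^a_{u,t}>0$. Moreover such $q$'s are computable in polynomial time. -/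
open Finset

/-! The greedy construction: for a non-root node `u`, lay the inflows `W t'` into `u` end to end
on the real line, and likewise the demands `D t = ∑ₐ x^a_{u,t}`. Let `q` route to demand slot `t`
the part of inflow slot `t'` that overlaps it, split among actions in proportion to `x^a_{u,t}`.
Each inflow slot is used at most once, and the `(PolyLP)` constraints say exactly that the first
`t` demands fit into the first `t - 1` inflows, so each demand slot is covered exactly by earlier
inflow slots. -/

noncomputable def intervalOverlap (a b c d : ℝ) : ℝ := max 0 (min b d - max a c)

section IntervalOverlap

variable {a b c d : ℝ}

lemma intervalOverlap_nonneg : 0 ≤ intervalOverlap a b c d := le_max_left _ _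

lemma intervalOverlap_comm : intervalOverlap a b c d = intervalOverlap c d a b := by
  simp only [intervalOverlap, min_comm b d, max_comm a c]

lemma intervalOverlap_le_sub (hab : a ≤ b) : intervalOverlap a b c d ≤ b - a :=
  max_le (sub_nonneg.2 hab) (by linarith [min_le_left b d, le_max_left a c])

/-- The overlap is the length of the projection of `[a, b]` onto `[c, d]`, so sums of overlaps
telescope. -/
lemma intervalOverlap_eq_sub (hab : a ≤ b) (hcd : c ≤ d) :
    intervalOverlap a b c d = max c (min b d) - max c (min a d) := by
  simp only [intervalOverlap, min_def, max_def]
  split_ifs <;> linarith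

lemma sum_Ioc_intervalOverlap {f : ℕ → ℝ} (hf : Monotone f) (hcd : c ≤ d) {m n : ℕ}
    (hmn : m ≤ n) :
    ∑ i ∈ Ioc m n, intervalOverlap (f (i - 1)) (f i) c d
      = max c (min (f n) d) - max c (min (f m) d) := by
  induction n, hmn using Nat.le_induction with
  | base => simp
  | succ n hmn ih =>
    rw [sum_Ioc_succ_top hmn, ih, Nat.add_sub_cancel,
      intervalOverlap_eq_sub (hf n.le_succ) hcd]
    ring

lemma sum_Ioc_intervalOverlap_le {f : ℕ → ℝ} (hf : Monotone f) (hcd : c ≤ d) (m n : ℕ) :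
    ∑ i ∈ Ioc m n, intervalOverlap (f (i - 1)) (f i) c d ≤ d - c := by
  rcases le_total m n with hmn | hnm
  · rw [sum_Ioc_intervalOverlap hf hcd hmn]
    linarith [le_max_left c (min (f m) d), max_le hcd (min_le_right (f n) d)]
  · simp [Ioc_eq_empty_of_le hnm, hcd]

lemma sum_Ioc_intervalOverlap_eq {f : ℕ → ℝ} (hf : Monotone f) (hcd : c ≤ d) {m n : ℕ}
    (hmn : m ≤ n) (hm : f m ≤ c) (hn : d ≤ f n) :
    ∑ i ∈ Ioc m n, intervalOverlap (f (i - 1)) (f i) c d = d - c := by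
  rw [sum_Ioc_intervalOverlap hf hcd hmn, min_eq_right hn, max_eq_right hcd,
    min_eq_left (hm.trans hcd), max_eq_left hm]

end IntervalOverlap

noncomputable def partialSum (f : ℕ → ℝ) (k : ℕ) : ℝ := ∑ i ∈ Icc 1 k, f i

section PartialSum

variable {f : ℕ → ℝ}

@[simp] lemma partialSum_zero : partialSum f 0 = 0 := by simp [partialSum]

lemma partialSum_succ (k : ℕ) : partialSum f (k + 1) = partialSum f k + f (k + 1) :=
  sum_Icc_succ_top (by omega) _

lemma partialSum_mono (hf : ∀ i, 0 ≤ f i) : Monotone (partialSum f) := fun _ _ h =>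
  sum_le_sum_of_subset_of_nonneg (Icc_subset_Icc_right h) fun i _ _ => hf i

lemma partialSum_nonneg (hf : ∀ i, 0 ≤ f i) (k : ℕ) : 0 ≤ partialSum f k :=
  sum_nonneg fun i _ => hf i

lemma partialSum_sub_pred_le (hf : ∀ i, 0 ≤ f i) (k : ℕ) :
    partialSum f k - partialSum f (k - 1) ≤ f k := by
  cases k with
  | zero => simpa using hf 0
  | succ k => simp [partialSum_succ]

lemma partialSum_sub_pred {k : ℕ} (hk : 1 ≤ k) : partialSum f k - partialSum f (k - 1) = f k := by
  obtain ⟨k, rfl⟩ := Nat.exists_eq_add_of_le' hk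
  simp [partialSum_succ]

lemma eq_partialSum_sub_of_recurrence {s D W : ℕ → ℝ} (h₁ : s 1 = 0)
    (hrec : ∀ t, 2 ≤ t → s t = s (t - 1) - D (t - 1) + W (t - 1)) {t : ℕ} (ht : 1 ≤ t) :
    s t = partialSum W (t - 1) - partialSum D (t - 1) := by
  induction t, ht using Nat.le_induction with
  | base => simp [h₁]
  | succ n hn ih =>
    rw [hrec _ (by omega), Nat.add_sub_cancel, ih, ← partialSum_sub_pred (f := W) hn,
      ← partialSum_sub_pred (f := D) hn]
    ring

end PartialSum

section Arm

variable {V A : Type*} [Fintype A] {x : V → A → ℕ → ℝ}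

noncomputable def demand (x : V → A → ℕ → ℝ) (u : V) (t : ℕ) : ℝ := ∑ a, x u a t

lemma demand_nonneg (hx : ∀ u a t, 0 ≤ x u a t) (u : V) (t : ℕ) : 0 ≤ demand x u t :=
  sum_nonneg fun a _ => hx u a t

lemma le_demand (hx : ∀ u a t, 0 ≤ x u a t) (u : V) (a : A) (t : ℕ) : x u a t ≤ demand x u t :=
  single_le_sum (fun b _ => hx u b t) (mem_univ a)

variable [Fintype V] {p : V → A → V → ℝ}

noncomputable def inflow (p : V → A → V → ℝ) (x : V → A → ℕ → ℝ) (u : V) (t : ℕ) : ℝ :=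
  ∑ v, ∑ b, x v b t * p v b u

noncomputable def greedyFlow (p : V → A → V → ℝ) (x : V → A → ℕ → ℝ) (u : V) (t' t : ℕ) : ℝ :=
  intervalOverlap (partialSum (inflow p x u) (t' - 1)) (partialSum (inflow p x u) t')
    (partialSum (demand x u) (t - 1)) (partialSum (demand x u) t)

noncomputable def greedyWeight (p : V → A → V → ℝ) (x : V → A → ℕ → ℝ) (u : V) (t' : ℕ) (a : A)
    (t : ℕ) : ℝ :=
  greedyFlow p x u t' t / inflow p x u t' * (x u a t / demand x u t)

lemma inflow_nonneg (hp : ∀ v b u, 0 ≤ p v b u) (hx : ∀ u a t, 0 ≤ x u a t) (u : V) (t : ℕ) :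
    0 ≤ inflow p x u t :=
  sum_nonneg fun v _ => sum_nonneg fun b _ => mul_nonneg (hx v b t) (hp v b u)

lemma sum_mul_inflow (u : V) (I : Finset ℕ) (g : ℕ → ℝ) :
    ∑ v, ∑ b, (∑ t' ∈ I, x v b t' * g t') * p v b u = ∑ t' ∈ I, g t' * inflow p x u t' := by
  simp_rw [inflow, sum_mul, mul_sum, sum_comm (s := I)]
  exact sum_congr rfl fun v _ => sum_congr rfl fun b _ => sum_congr rfl fun t' _ => by ring

lemma greedyFlow_le_inflow (hp : ∀ v b u, 0 ≤ p v b u) (hx : ∀ u a t, 0 ≤ x u a t) (u : V)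
    (t' t : ℕ) : greedyFlow p x u t' t ≤ inflow p x u t' :=
  (intervalOverlap_le_sub (partialSum_mono (inflow_nonneg hp hx u) (Nat.sub_le t' 1))).trans
    (partialSum_sub_pred_le (inflow_nonneg hp hx u) t')

lemma sum_greedyFlow_le (hp : ∀ v b u, 0 ≤ p v b u) (hx : ∀ u a t, 0 ≤ x u a t) (u : V)
    (t' B : ℕ) : ∑ t ∈ Icc (t' + 1) B, greedyFlow p x u t' t ≤ inflow p x u t' := by
  simp only [greedyFlow, Icc_add_one_left_eq_Ioc]
  simp_rw [intervalOverlap_comm (a := partialSum (inflow p x u) (t' - 1))]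
  exact (sum_Ioc_intervalOverlap_le (partialSum_mono (demand_nonneg hx u))
    (partialSum_mono (inflow_nonneg hp hx u) (Nat.sub_le t' 1)) t' B).trans
    (partialSum_sub_pred_le (inflow_nonneg hp hx u) t')

lemma sum_greedyFlow_eq (hp : ∀ v b u, 0 ≤ p v b u) (hx : ∀ u a t, 0 ≤ x u a t) {u : V}
    {t : ℕ} (ht : 1 ≤ t)
    (hfit : partialSum (demand x u) t ≤ partialSum (inflow p x u) (t - 1)) :
    ∑ t' ∈ Icc 1 (t - 1), greedyFlow p x u t' t = demand x u t := by
  rw [← partialSum_sub_pred (f := demand x u) ht,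
    show Icc 1 (t - 1) = Ioc 0 (t - 1) from Icc_add_one_left_eq_Ioc 0 _]
  exact sum_Ioc_intervalOverlap_eq (partialSum_mono (inflow_nonneg hp hx u))
    (partialSum_mono (demand_nonneg hx u) (Nat.sub_le t 1)) (Nat.zero_le _)
    (by simpa using partialSum_nonneg (demand_nonneg hx u) (t - 1)) hfit

lemma partialSum_demand_le_partialSum_inflow {s : ℕ → ℝ} {u : V} (hdemand : ∀ t, demand x u t ≤ s t)
    (h₁ : s 1 = 0)
    (hrec : ∀ t, 2 ≤ t → s t = s (t - 1) - demand x u (t - 1) + inflow p x u (t - 1))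
    {t : ℕ} (ht : 1 ≤ t) :
    partialSum (demand x u) t ≤ partialSum (inflow p x u) (t - 1) := by
  linarith [hdemand t, eq_partialSum_sub_of_recurrence h₁ hrec ht,
    partialSum_sub_pred (f := demand x u) ht]

lemma greedyWeight_nonneg (hp : ∀ v b u, 0 ≤ p v b u) (hx : ∀ u a t, 0 ≤ x u a t) (u : V)
    (t' : ℕ) (a : A) (t : ℕ) : 0 ≤ greedyWeight p x u t' a t :=
  mul_nonneg (div_nonneg intervalOverlap_nonneg (inflow_nonneg hp hx u t'))
    (div_nonneg (hx u a t) (demand_nonneg hx u t))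

lemma greedyWeight_le_one (hp : ∀ v b u, 0 ≤ p v b u) (hx : ∀ u a t, 0 ≤ x u a t) (u : V)
    (t' : ℕ) (a : A) (t : ℕ) : greedyWeight p x u t' a t ≤ 1 :=
  mul_le_one₀ (div_le_one_of_le₀ (greedyFlow_le_inflow hp hx u t' t) (inflow_nonneg hp hx u t'))
    (div_nonneg (hx u a t) (demand_nonneg hx u t))
    (div_le_one_of_le₀ (le_demand hx u a t) (demand_nonneg hx u t))

lemma sum_greedyWeight_le_one (hp : ∀ v b u, 0 ≤ p v b u) (hx : ∀ u a t, 0 ≤ x u a t) (u : V)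
    (t' B : ℕ) : ∑ a, ∑ t ∈ Icc (t' + 1) B, greedyWeight p x u t' a t ≤ 1 := by
  have hshare : ∀ t, ∑ a, x u a t / demand x u t ≤ 1 := fun t => by
    rw [← sum_div]
    exact div_self_le_one _
  calc ∑ a, ∑ t ∈ Icc (t' + 1) B, greedyWeight p x u t' a t
      = ∑ t ∈ Icc (t' + 1) B,
          greedyFlow p x u t' t / inflow p x u t' * ∑ a, x u a t / demand x u t := by
        rw [sum_comm]
        simp only [greedyWeight, mul_sum]
    _ ≤ ∑ t ∈ Icc (t' + 1) B, greedyFlow p x u t' t / inflow p x u t' :=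
        sum_le_sum fun t _ => mul_le_of_le_one_right
          (div_nonneg intervalOverlap_nonneg (inflow_nonneg hp hx u t')) (hshare t)
    _ ≤ 1 := by
        rw [← sum_div]
        exact div_le_one_of_le₀ (sum_greedyFlow_le hp hx u t' B) (inflow_nonneg hp hx u t')

lemma sum_mul_greedyWeight (hp : ∀ v b u, 0 ≤ p v b u) (hx : ∀ u a t, 0 ≤ x u a t) {u : V}
    (a : A) {t : ℕ} (ht : 1 ≤ t)
    (hfit : partialSum (demand x u) t ≤ partialSum (inflow p x u) (t - 1)) :
    ∑ v, ∑ b, (∑ t' ∈ Icc 1 (t - 1), x v b t' * greedyWeight p x u t' a t) * p v b u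
      = x u a t := by
  have hflow : ∀ t', greedyFlow p x u t' t / inflow p x u t' * inflow p x u t'
      = greedyFlow p x u t' t := fun t' => div_mul_cancel_of_imp fun h =>
    le_antisymm (h ▸ greedyFlow_le_inflow hp hx u t' t) intervalOverlap_nonneg
  calc ∑ v, ∑ b, (∑ t' ∈ Icc 1 (t - 1), x v b t' * greedyWeight p x u t' a t) * p v b u
      = ∑ t' ∈ Icc 1 (t - 1), greedyFlow p x u t' t * (x u a t / demand x u t) := by
        rw [sum_mul_inflow]
        exact sum_congr rfl fun t' _ => by rw [greedyWeight, mul_right_comm, hflow]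
    _ = x u a t / demand x u t * demand x u t := by
        rw [← sum_mul, sum_greedyFlow_eq hp hx ht hfit, mul_comm]
    _ = x u a t := div_mul_cancel_of_imp fun h =>
        le_antisymm (h ▸ le_demand hx u a t) (hx u a t)

end Arm

theorem stmt10_general {V A : Type*} [Fintype V] [Fintype A] (B : ℕ)
    (root : V → Prop) (p : V → A → V → ℝ)
    (x : V → A → ℕ → ℝ) (s : V → ℕ → ℝ)
    (hpnn : ∀ v b u, 0 ≤ p v b u)
    (hxnn : ∀ u a t, 0 ≤ x u a t)
    (hP2 : ∀ u t, ∑ a, x u a t ≤ s u t)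
    (hP4b : ∀ u, ¬ root u → s u 1 = 0)
    (hP5 : ∀ u t, 2 ≤ t →
      s u t = s u (t - 1) - (∑ a, x u a (t - 1)) + ∑ v, ∑ b, x v b (t - 1) * p v b u) :
    ∃ q : V → A → ℕ → V → A → ℕ → ℝ,
      (∀ v b t' u a t, 0 ≤ q v b t' u a t ∧ q v b t' u a t ≤ 1) ∧
      (∀ u v b, ∀ t' ∈ Icc 1 B, 0 < p v b u → 0 < x v b t' →
        ∑ a, ∑ t ∈ Icc (t' + 1) B, q v b t' u a t ≤ 1) ∧
      (∀ u (a : A), ¬ root u → ∀ t ∈ Icc 1 B, 0 < x u a t →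
        ∑ v, ∑ b, (∑ t' ∈ Icc 1 (t - 1), x v b t' * q v b t' u a t) * p v b u
          = x u a t) := by
  refine ⟨fun _ _ t' u a t => greedyWeight p x u t' a t,
    fun _ _ t' u a t => ⟨greedyWeight_nonneg hpnn hxnn u t' a t,
      greedyWeight_le_one hpnn hxnn u t' a t⟩,
    fun u _ _ t' _ _ _ => sum_greedyWeight_le_one hpnn hxnn u t' B,
    fun u a hu t ht _ => ?_⟩
  have ht : 1 ≤ t := (mem_Icc.1 ht).1
  exact sum_mul_greedyWeight hpnn hxnn a ht
    (partialSum_demand_le_partialSum_inflow (hP2 u) (hP4b u hu) (hP5 u) ht)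

/-- Flow decomposition (Lemma 6.1): given the `x`-part of a feasible solution of
`(PolyLP)` (on an arm with nodes `V`, actions `A`, transitions `p`, horizon `B`),
there are probabilities `q_{v,b,t',u,a,t} ∈ [0,1]` such that
(i) `∑ₐ ∑_{t > t'} q_{v,b,t',u,a,t} ≤ 1` whenever `(v,b) ∈ Par(u)` and `x^b_{v,t'} > 0`,
and (ii) `∑_{(v,b) ∈ Par(u)} (∑_{t' < t} x^b_{v,t'} q_{v,b,t',u,a,t}) p^b_{v,u} = x^a_{u,t}`
for every non-root `u`, action `a` and `t ∈ [B]` with `x^a_{u,t} > 0`. -/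
theorem stmt10 {V A : Type*} [Fintype V] [Fintype A] (B : ℕ)
    (root : V → Prop) (p : V → A → V → ℝ)
    (x : V → A → ℕ → ℝ) (s : V → ℕ → ℝ)
    (hpnn : ∀ v b u, 0 ≤ p v b u)
    (hxnn : ∀ u a t, 0 ≤ x u a t)
    (hsnn : ∀ u t, 0 ≤ s u t)
    (hP2 : ∀ u t, ∑ a, x u a t ≤ s u t)
    (hP4b : ∀ u, ¬ root u → s u 1 = 0)
    (hP5 : ∀ u t, 2 ≤ t →
      s u t = s u (t - 1) - (∑ a, x u a (t - 1)) + ∑ v, ∑ b, x v b (t - 1) * p v b u) :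
    ∃ q : V → A → ℕ → V → A → ℕ → ℝ,
      (∀ v b t' u a t, 0 ≤ q v b t' u a t ∧ q v b t' u a t ≤ 1) ∧
      (∀ u v b, ∀ t' ∈ Icc 1 B, 0 < p v b u → 0 < x v b t' →
        ∑ a, ∑ t ∈ Icc (t' + 1) B, q v b t' u a t ≤ 1) ∧
      (∀ u (a : A), ¬ root u → ∀ t ∈ Icc 1 B, 0 < x u a t →
        ∑ v, ∑ b, (∑ t' ∈ Icc 1 (t - 1), x v b t' * q v b t' u a t) * p v b u
          = x u a t) :=
  stmt10_general B root p x s hpnn hxnn hP2 hP4b hP5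
end

section
/- Given a feasible solution $\{z^a_{\pi,i,t}\}, \{y_{\pi,t}\}$ of the exponential LP $(\mathtt{ExpLP})$ for the MAB superprocess, the projections $x^a_{u,t} = \sum_{\pi: \pi_i = u} z^a_{\pi,i,t}$ and $s_{u,t} = \sum_{\pi: \pi_i = u} y_{\pi,t}$ yield a feasible solution of the polynomial LP $(\mathtt{PolyLP})$ with the same objective value. In particular $\mathrm{OPT}_{\mathtt{ExpLP}} \le \mathrm{OPT}_{\mathtt{PolyLP}}$. -/
/-!
Every constraint of `(PolyLP)` is obtained by summing the corresponding constraint of `(ExpLP)`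
over the fibre `{π | π i = u}`. The only nontrivial one is the flow update (P5): the inflow of
`(ExpLP)` into `π` along an arm `j ≠ i` changes only the `j`-th coordinate, so summed over the
fibre it reparametrises to the fibre itself, and since each `p j v a ·` sums to `1` it cancels the
outflow along arm `j`; what remains is the outflow and inflow along arm `i` alone.
-/

open Finset

section Marginals

variable {ι : Type*} [Fintype ι] [DecidableEq ι] {𝒮 : ι → Type*} [∀ i, Fintype (𝒮 i)]
  [∀ i, DecidableEq (𝒮 i)] {A R : Type*} [Fintype A]

theorem sum_filter_apply_eq_apply_update {β : Type*} [AddCommMonoid β] (i : ι) (u v : 𝒮 i)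
    (f : (∀ j, 𝒮 j) → β) :
    ∑ π ∈ univ.filter (fun π => π i = u), f (Function.update π i v)
      = ∑ σ ∈ univ.filter (fun σ => σ i = v), f σ := by
  apply sum_nbij' (Function.update · i v) (Function.update · i u) <;>
    intro π hπ <;> simp_all [Function.update_idem]

theorem sum_filter_sum_apply_update_of_ne {β : Type*} [AddCommMonoid β] {i j : ι} (hij : i ≠ j)
    (u : 𝒮 i) (g : (∀ k, 𝒮 k) → 𝒮 j → β) :
    ∑ π ∈ univ.filter (fun π => π i = u), ∑ v, g (Function.update π j v) (π j)
      = ∑ σ ∈ univ.filter (fun σ => σ i = u), ∑ w, g σ w := by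
  rw [← sum_product', ← sum_product']
  -- `(π, v) ↦ (π[j ↦ v], π j)` is an involution preserving the fibre `π i = u`
  apply sum_nbij' (fun q => (Function.update q.1 j q.2, q.1 j))
      (fun q => (Function.update q.1 j q.2, q.1 j)) <;>
    rintro ⟨π, v⟩ h <;> simp_all

theorem sum_sum_fiberwise_eval {β : Type*} [AddCommMonoid β]
    (f : (∀ j, 𝒮 j) → (i : ι) → 𝒮 i → A → β) :
    ∑ i, ∑ u : 𝒮 i, ∑ a, ∑ π ∈ univ.filter (fun π => π i = u), f π i u a
      = ∑ π, ∑ i, ∑ a, f π i (π i) a := by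
  rw [sum_comm]
  refine sum_congr rfl fun i _ => ?_
  rw [← sum_fiberwise univ (fun π => π i) fun π => ∑ a, f π i (π i) a]
  refine sum_congr rfl fun u _ => ?_
  rw [sum_comm]
  exact sum_congr rfl fun π hπ => by rw [(mem_filter.1 hπ).2]

theorem sum_filter_inflow_of_ne [CommSemiring R] {i j : ι} (hji : j ≠ i) (u : 𝒮 i)
    (w : (∀ k, 𝒮 k) → A → R) (q : 𝒮 j → A → 𝒮 j → R) (hq : ∀ v a, ∑ x, q v a x = 1) :
    ∑ π ∈ univ.filter (fun π => π i = u), ∑ v, ∑ a, w (Function.update π j v) a * q v a (π j)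
      = ∑ π ∈ univ.filter (fun π => π i = u), ∑ a, w π a :=
  calc _ = ∑ π ∈ univ.filter (fun π => π i = u), ∑ v,
          (fun σ x => ∑ a, w σ a * q (σ j) a x) (Function.update π j v) (π j) := by
        simp only [Function.update_self]
    _ = ∑ σ ∈ univ.filter (fun σ => σ i = u), ∑ x, ∑ a, w σ a * q (σ j) a x :=
        sum_filter_sum_apply_update_of_ne hji.symm u fun σ x => ∑ a, w σ a * q (σ j) a x
    _ = _ := sum_congr rfl fun σ _ => by rw [sum_comm]; simp [← mul_sum, hq]

theorem sum_filter_inflow_self [CommSemiring R] (i : ι) (u : 𝒮 i) (w : (∀ k, 𝒮 k) → A → R)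
    (q : 𝒮 i → A → 𝒮 i → R) :
    ∑ π ∈ univ.filter (fun π => π i = u), ∑ v, ∑ a, w (Function.update π i v) a * q v a (π i)
      = ∑ v, ∑ a, (∑ π ∈ univ.filter (fun π => π i = v), w π a) * q v a u :=
  calc _ = ∑ v, ∑ π ∈ univ.filter (fun π => π i = u),
          ∑ a, w (Function.update π i v) a * q v a u := by
        rw [sum_comm]
        exact sum_congr rfl fun v _ => sum_congr rfl fun π hπ => by rw [(mem_filter.1 hπ).2]
    _ = ∑ v, ∑ π ∈ univ.filter (fun π => π i = v), ∑ a, w π a * q v a u :=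
        sum_congr rfl fun v _ =>
          sum_filter_apply_eq_apply_update i u v fun σ => ∑ a, w σ a * q v a u
    _ = _ := by simp_rw [sum_mul]; exact sum_congr rfl fun v _ => sum_comm

theorem sum_filter_eq_of_flow [CommRing R] (p : ∀ i, 𝒮 i → A → 𝒮 i → R)
    (hp : ∀ i u a, ∑ v, p i u a v = 1) (z : (∀ i, 𝒮 i) → ι → A → R) (y y' : (∀ i, 𝒮 i) → R)
    (hflow : ∀ π, y' π = y π - ∑ j, ∑ a, z π j a
      + ∑ j, ∑ v, ∑ a, z (Function.update π j v) j a * p j v a (π j))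
    (i : ι) (u : 𝒮 i) :
    ∑ π ∈ univ.filter (fun π => π i = u), y' π
      = ∑ π ∈ univ.filter (fun π => π i = u), y π
        - ∑ a, ∑ π ∈ univ.filter (fun π => π i = u), z π i a
        + ∑ v, ∑ a, (∑ π ∈ univ.filter (fun π => π i = v), z π i a) * p i v a u := by
  have split_arm : ∀ F : (∀ k, 𝒮 k) → ι → R,
      ∑ π ∈ univ.filter (fun π => π i = u), ∑ j, F π j
        = ∑ π ∈ univ.filter (fun π => π i = u), F π i
          + ∑ j ∈ univ.erase i, ∑ π ∈ univ.filter (fun π => π i = u), F π j := fun F => by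
    rw [sum_comm]
    exact (add_sum_erase univ (fun j => ∑ π ∈ univ.filter (fun π => π i = u), F π j)
      (mem_univ i)).symm
  have inflow_other_arms : ∑ j ∈ univ.erase i, ∑ π ∈ univ.filter (fun π => π i = u),
        ∑ v, ∑ a, z (Function.update π j v) j a * p j v a (π j)
      = ∑ j ∈ univ.erase i, ∑ π ∈ univ.filter (fun π => π i = u), ∑ a, z π j a :=
    sum_congr rfl fun j hj =>
      sum_filter_inflow_of_ne (ne_of_mem_erase hj) u (fun σ a => z σ j a) (p j) (hp j)
  rw [sum_congr rfl fun π _ => hflow π, sum_add_distrib, sum_sub_distrib, split_arm, split_arm,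
    inflow_other_arms, sum_filter_inflow_self i u (fun σ a => z σ i a) (p i),
    sum_comm (s := univ.filter _)]
  ring

end Marginals

theorem stmt12_general {n : ℕ} (𝒮 : Fin n → Type*) [∀ i, Fintype (𝒮 i)] [∀ i, DecidableEq (𝒮 i)]
    {A : Type*} [Fintype A] (B : ℕ)
    (ρ : ∀ i, 𝒮 i) (p : ∀ i, 𝒮 i → A → 𝒮 i → ℝ) (r : ∀ i, 𝒮 i → A → ℝ)
    (hpsum : ∀ i u a, ∑ v, p i u a v = 1)
    (z : (∀ i, 𝒮 i) → Fin n → A → ℕ → ℝ) (y : (∀ i, 𝒮 i) → ℕ → ℝ)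
    -- (E1)
    (hE1 : ∀ t, ∑ π, ∑ i, ∑ a, z π i a t ≤ 1)
    -- (E2)
    (hE2 : ∀ π t, ∑ i, ∑ a, z π i a t ≤ y π t)
    -- (E3)
    (hE3 : ∀ π i a t, 0 ≤ z π i a t)
    -- (E4a), (E4b)
    (hE4a : y ρ 1 = 1)
    (hE4b : ∀ π, π ≠ ρ → y π 1 = 0)
    -- (E5)
    (hE5 : ∀ π t, 2 ≤ t →
      y π t = y π (t - 1) - (∑ i, ∑ a, z π i a (t - 1))
        + ∑ i, ∑ v, ∑ a, z (Function.update π i v) i a (t - 1) * p i v a (π i)) :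
    -- (P1)
    (∀ t, ∑ i, ∑ u, ∑ a,
        (∑ π ∈ univ.filter (fun π => π i = u), z π i a t) ≤ 1) ∧
    -- (P2)
    (∀ i (u : 𝒮 i) t,
        ∑ a, (∑ π ∈ univ.filter (fun π => π i = u), z π i a t)
          ≤ ∑ π ∈ univ.filter (fun π => π i = u), y π t) ∧
    -- (P3)
    (∀ i (u : 𝒮 i) (a : A) t,
        0 ≤ ∑ π ∈ univ.filter (fun π => π i = u), z π i a t) ∧
    -- (P4a)
    (∀ i, ∑ π ∈ univ.filter (fun π => π i = ρ i), y π 1 = 1) ∧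
    -- (P4b)
    (∀ i (u : 𝒮 i), u ≠ ρ i → ∑ π ∈ univ.filter (fun π => π i = u), y π 1 = 0) ∧
    -- (P5)
    (∀ i (u : 𝒮 i) t, 2 ≤ t →
        ∑ π ∈ univ.filter (fun π => π i = u), y π t
          = (∑ π ∈ univ.filter (fun π => π i = u), y π (t - 1))
            - (∑ a, ∑ π ∈ univ.filter (fun π => π i = u), z π i a (t - 1))
            + ∑ v, ∑ a,
                (∑ π ∈ univ.filter (fun π => π i = v), z π i a (t - 1)) * p i v a u) ∧
    -- objectives agree
    (∑ t ∈ Icc 1 B, ∑ i, ∑ u, ∑ a,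
        r i u a * (∑ π ∈ univ.filter (fun π => π i = u), z π i a t)
      = ∑ t ∈ Icc 1 B, ∑ π, ∑ i, ∑ a, r i (π i) a * z π i a t) := by
  refine ⟨fun t => ?_, fun i u t => ?_, fun i u a t => sum_nonneg fun π _ => hE3 π i a t,
    fun i => ?_, fun i u hu => ?_, fun i u t ht => ?_, sum_congr rfl fun t _ => ?_⟩
  · rw [sum_sum_fiberwise_eval fun π i _ a => z π i a t]
    exact hE1 t
  · rw [sum_comm]
    exact sum_le_sum fun π _ => (single_le_sum (fun j _ => sum_nonneg fun a _ => hE3 π j a t)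
      (mem_univ i)).trans (hE2 π t)
  · rw [sum_eq_single_of_mem ρ (by simp) fun π _ hπ => hE4b π hπ, hE4a]
  · exact sum_eq_zero fun π hπ => hE4b π <| by rintro rfl; exact hu (mem_filter.1 hπ).2.symm
  · exact sum_filter_eq_of_flow p hpsum (fun π j a => z π j a (t - 1)) (y · (t - 1)) (y · t)
      (fun π => hE5 π t ht) i u
  · simp_rw [mul_sum]
    exact sum_sum_fiberwise_eval fun π i u a => r i u a * z π i a t

/-- Projection lemma (Lemma 4.1, no bridge nodes): from a feasible solution
`(z, y)` of the exponential LP `(ExpLP)` over joint nodes `π ∈ ∏ᵢ 𝒮 i`, the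
marginals `x^a_{u,t} = ∑_{π : πᵢ = u} z^a_{π,i,t}` and `s_{u,t} = ∑_{π : πᵢ = u} y_{π,t}`
satisfy all constraints `(P1)`–`(P5)` of the polynomial LP `(PolyLP)`, and the two
objective values agree; hence `OPT_ExpLP ≤ OPT_PolyLP`. -/
theorem stmt12 {n : ℕ} (𝒮 : Fin n → Type*) [∀ i, Fintype (𝒮 i)] [∀ i, DecidableEq (𝒮 i)]
    {A : Type*} [Fintype A] (B : ℕ)
    (ρ : ∀ i, 𝒮 i) (p : ∀ i, 𝒮 i → A → 𝒮 i → ℝ) (r : ∀ i, 𝒮 i → A → ℝ)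
    (hpnn : ∀ i u a v, 0 ≤ p i u a v)
    (hpsum : ∀ i u a, ∑ v, p i u a v = 1)
    (z : (∀ i, 𝒮 i) → Fin n → A → ℕ → ℝ) (y : (∀ i, 𝒮 i) → ℕ → ℝ)
    -- (E1)
    (hE1 : ∀ t, ∑ π, ∑ i, ∑ a, z π i a t ≤ 1)
    -- (E2)
    (hE2 : ∀ π t, ∑ i, ∑ a, z π i a t ≤ y π t)
    -- (E3)
    (hE3 : ∀ π i a t, 0 ≤ z π i a t)
    -- (E4a), (E4b)
    (hE4a : y ρ 1 = 1)
    (hE4b : ∀ π, π ≠ ρ → y π 1 = 0)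
    -- (E5)
    (hE5 : ∀ π t, 2 ≤ t →
      y π t = y π (t - 1) - (∑ i, ∑ a, z π i a (t - 1))
        + ∑ i, ∑ v, ∑ a, z (Function.update π i v) i a (t - 1) * p i v a (π i)) :
    -- (P1)
    (∀ t, ∑ i, ∑ u, ∑ a,
        (∑ π ∈ univ.filter (fun π => π i = u), z π i a t) ≤ 1) ∧
    -- (P2)
    (∀ i (u : 𝒮 i) t,
        ∑ a, (∑ π ∈ univ.filter (fun π => π i = u), z π i a t)
          ≤ ∑ π ∈ univ.filter (fun π => π i = u), y π t) ∧
    -- (P3)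
    (∀ i (u : 𝒮 i) (a : A) t,
        0 ≤ ∑ π ∈ univ.filter (fun π => π i = u), z π i a t) ∧
    -- (P4a)
    (∀ i, ∑ π ∈ univ.filter (fun π => π i = ρ i), y π 1 = 1) ∧
    -- (P4b)
    (∀ i (u : 𝒮 i), u ≠ ρ i → ∑ π ∈ univ.filter (fun π => π i = u), y π 1 = 0) ∧
    -- (P5)
    (∀ i (u : 𝒮 i) t, 2 ≤ t →
        ∑ π ∈ univ.filter (fun π => π i = u), y π t
          = (∑ π ∈ univ.filter (fun π => π i = u), y π (t - 1))
            - (∑ a, ∑ π ∈ univ.filter (fun π => π i = u), z π i a (t - 1))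
            + ∑ v, ∑ a,
                (∑ π ∈ univ.filter (fun π => π i = v), z π i a (t - 1)) * p i v a u) ∧
    -- objectives agree
    (∑ t ∈ Icc 1 B, ∑ i, ∑ u, ∑ a,
        r i u a * (∑ π ∈ univ.filter (fun π => π i = u), z π i a t)
      = ∑ t ∈ Icc 1 B, ∑ π, ∑ i, ∑ a, r i (π i) a * z π i a t) :=
  stmt12_general 𝒮 B ρ p r hpsum z y hE1 hE2 hE3 hE4a hE4b hE5
end

section
/- In the algorithm of Theorem 2.1, for every arm $i$, every node $u \in \mathcal{S}_i$, and time $t \in [B]$, the probability that the algorithm ever plays arm $i$ from status $(u,t)$ equals $x_{u,t}/3$, where $\{x_{u,t}\}$ is the fixed optimal LP solution. -/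
/-!
Both `P` and `x / 3` solve the same forward recursion: the recursion for `P` is the
description of the algorithm, and for `x / 3` it is the flow decomposition property of
the `q`'s divided by 3. The recursion expresses the value at a node through values at
strictly shallower nodes only, so on a layered arm its solution is determined by the
values at the root, where the two agree by initialization.
-/

open Finset

section ForwardRecursion

variable {V : Type*} [Fintype V] (B : ℕ) (ρ : V) (w : V → ℕ → V → ℕ → ℝ)

def SolvesForwardRecursion (f : V → ℕ → ℝ) : Prop :=
  ∀ u, u ≠ ρ → ∀ t ∈ Icc 1 B, f u t = ∑ v, ∑ t' ∈ Icc 1 (t - 1), f v t' * w v t' u t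

theorem SolvesForwardRecursion.eqOn_of_eqOn_root {depth : V → ℕ}
    (hw : ∀ v t' u t, w v t' u t ≠ 0 → depth v < depth u) {f g : V → ℕ → ℝ}
    (hf : SolvesForwardRecursion B ρ w f) (hg : SolvesForwardRecursion B ρ w g)
    (hρ : ∀ t ∈ Icc 1 B, f ρ t = g ρ t) :
    ∀ u, ∀ t ∈ Icc 1 B, f u t = g u t := by
  intro u
  induction h : depth u using Nat.strong_induction_on generalizing u with
  | _ n ih =>
    intro t ht
    by_cases hu : u = ρ
    · exact hu ▸ hρ t ht
    rw [hf u hu t ht, hg u hu t ht]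
    refine sum_congr rfl fun v _ => sum_congr rfl fun t' ht' => ?_
    by_cases hwv : w v t' u t = 0
    · simp [hwv]
    have ht'B : t' ∈ Icc 1 B := by
      simp only [mem_Icc] at ht ht' ⊢
      omega
    rw [ih (depth v) (h ▸ hw v t' u t hwv) v rfl t' ht'B]

end ForwardRecursion

theorem stmt13_general {V : Type*} [Fintype V] (B : ℕ) (ρ : V) (depth : V → ℕ)
    (p : V → V → ℝ) (q : V → ℕ → V → ℕ → ℝ) (x : V → ℕ → ℝ) (P : V → ℕ → ℝ)
    -- layered, acyclic, rooted structure
    (hlayer : ∀ v u, p v u ≠ 0 → depth u = depth v + 1)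
    -- flow decomposition property of the q's (Lemma 2.2)
    (hflow : ∀ u, u ≠ ρ → ∀ t ∈ Icc 1 B,
      ∑ v, (∑ t' ∈ Icc 1 (t - 1), x v t' * q v t' u t) * p v u = x u t)
    -- each arm is initialized to status (ρ,t) with probability x_{ρ,t}/3
    (hinit : ∀ t ∈ Icc 1 B, P ρ t = x ρ t / 3)
    -- upon playing status (v,t') and transitioning to u, move to status (u,t)
    -- with probability q_{v,t',u,t}
    (hrec : ∀ u, u ≠ ρ → ∀ t ∈ Icc 1 B,
      P u t = ∑ v, ∑ t' ∈ Icc 1 (t - 1), P v t' * p v u * q v t' u t) :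
    ∀ u, ∀ t ∈ Icc 1 B, P u t = x u t / 3 := by
  set w : V → ℕ → V → ℕ → ℝ := fun v t' u t => p v u * q v t' u t
  have hw : ∀ v t' u t, w v t' u t ≠ 0 → depth v < depth u := fun v t' u t hne => by
    have := hlayer v u (left_ne_zero_of_mul hne)
    omega
  have hP : SolvesForwardRecursion B ρ w P := by
    simpa only [SolvesForwardRecursion, w, mul_assoc] using hrec
  have hx : SolvesForwardRecursion B ρ w (fun v t => x v t / 3) := fun u hu t ht => by
    show x u t / 3 = ∑ v, ∑ t' ∈ Icc 1 (t - 1), x v t' / 3 * w v t' u t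
    rw [← hflow u hu t ht, sum_div]
    refine sum_congr rfl fun v _ => ?_
    rw [sum_mul, sum_div]
    exact sum_congr rfl fun t' _ => by ring
  exact hP.eqOn_of_eqOn_root B ρ w hw hx hinit

/-- In the algorithm of Theorem 2.1 on a layered arm with root `ρ`: the probability
`P u t` that the algorithm ever plays the arm from status `(u,t)` — initialized to
`x_{ρ,t}/3` at the root and propagated by the transition/priority probabilities
`p`, `q` (where `q` is the flow decomposition of the optimal LP solution `x`) —
equals `x_{u,t}/3` for every node `u` and `t ∈ [B]`. -/
theorem stmt13 {V : Type*} [Fintype V] (B : ℕ) (ρ : V) (depth : V → ℕ)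
    (p : V → V → ℝ) (q : V → ℕ → V → ℕ → ℝ) (x : V → ℕ → ℝ) (P : V → ℕ → ℝ)
    -- layered, acyclic, rooted structure
    (hdepthρ : depth ρ = 0)
    (hlayer : ∀ v u, p v u ≠ 0 → depth u = depth v + 1)
    (hroot : ∀ u, depth u = 0 → u = ρ)
    -- flow decomposition property of the q's (Lemma 2.2)
    (hflow : ∀ u, u ≠ ρ → ∀ t ∈ Icc 1 B,
      ∑ v, (∑ t' ∈ Icc 1 (t - 1), x v t' * q v t' u t) * p v u = x u t)
    -- each arm is initialized to status (ρ,t) with probability x_{ρ,t}/3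
    (hinit : ∀ t ∈ Icc 1 B, P ρ t = x ρ t / 3)
    -- upon playing status (v,t') and transitioning to u, move to status (u,t)
    -- with probability q_{v,t',u,t}
    (hrec : ∀ u, u ≠ ρ → ∀ t ∈ Icc 1 B,
      P u t = ∑ v, ∑ t' ∈ Icc 1 (t - 1), P v t' * p v u * q v t' u t) :
    ∀ u, ∀ t ∈ Icc 1 B, P u t = x u t / 3 :=
  stmt13_general B ρ depth p q x P hlayer hflow hinit hrec
end

section
/- Suppose nonnegative reals $x_{j,t'}$ (for $j\in[n]$, $t'\in[B]$) satisfy $\sum_j \sum_{t'\le t} x_{j,t'} \Pr[S_j > t-t'] \le 1$ and $\sum_{t'\le B} x_{j,t'} \le 1$, and an event collection satisfies $\Pr[\mathcal{X}_{j,t'}] \le (1-\varepsilon)\frac{x_{j,t'}}{2} + \frac{\varepsilon}{4Bn}$ for all $j, t' < t$. If $F = 1 - \sum_{t'<t}\Pr[\mathcal{X}_{i,t'}] - \sum_j\sum_{t'<t}\Pr[\mathcal{X}_{j,t'}]\Pr[S_j > t-t']$ is a lower bound for $\mathrm{Free}(i,t)$, then $\mathrm{Free}(i,t) \ge \sum_{j=1}^n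 \frac{x_{j,t}}{2}$. -/
/-!
Each job started before `t` is charged its LP weight scaled by `(1 - ε)/2` plus a slack of
`ε/(4Bn)`. Summed over at most `B` start times and `n` jobs, the slack costs at most `ε/4` in
each of the two terms of the union bound, while the LP constraints bound the remaining parts by
`(1 - ε)/2` and by `(1 - ∑ⱼ x_{j,t})/2`; hence `1 - F ≤ 1 - ∑ⱼ x_{j,t}/2`.
-/

open Finset

section

variable {ι : Type*} (s : Finset ι) {a c : ℝ}

theorem sum_le_mul_sum_add_card_mul {f x : ι → ℝ} (h : ∀ k ∈ s, f k ≤ a * x k + c) :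
    ∑ k ∈ s, f k ≤ a * ∑ k ∈ s, x k + #s * c :=
  calc ∑ k ∈ s, f k ≤ ∑ k ∈ s, (a * x k + c) := sum_le_sum h
    _ = a * ∑ k ∈ s, x k + #s * c := by rw [sum_add_distrib, sum_const, nsmul_eq_mul, mul_sum]

theorem sum_mul_le_mul_sum_add_card_mul {q x g : ι → ℝ} (hq : ∀ k ∈ s, q k ≤ a * x k + c)
    (hc : 0 ≤ c) (hg0 : ∀ k ∈ s, 0 ≤ g k) (hg1 : ∀ k ∈ s, g k ≤ 1) :
    ∑ k ∈ s, q k * g k ≤ a * ∑ k ∈ s, x k * g k + #s * c :=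
  sum_le_mul_sum_add_card_mul s fun k hk => by
    have := hq k hk; have := hg0 k hk; have := hg1 k hk
    nlinarith

end

theorem natCast_mul_card_mul_div_le {n N B : ℕ} {ε : ℝ} (hN : N ≤ B) (hε : 0 ≤ ε) :
    (n : ℝ) * (N * (ε / (4 * B * n))) ≤ ε / 4 := by
  rcases Nat.eq_zero_or_pos n with rfl | hn
  · simp only [Nat.cast_zero, zero_mul]; positivity
  rcases Nat.eq_zero_or_pos B with rfl | hB
  · simp only [Nat.cast_zero, mul_zero, zero_mul, div_zero]; positivity
  have hNB : (N : ℝ) ≤ B := by exact_mod_cast hN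
  rw [show (n : ℝ) * (N * (ε / (4 * B * n))) = N / B * (ε / 4) by field_simp]
  exact mul_le_of_le_one_left (by positivity) (div_le_one_of_le₀ hNB (Nat.cast_nonneg B))

theorem sum_Icc_mul_sub_eq_sum_Ico_add {x g : ℕ → ℝ} {t : ℕ} (hg0 : g 0 = 1) (ht : 1 ≤ t) :
    ∑ t' ∈ Icc 1 t, x t' * g (t - t') = ∑ t' ∈ Ico 1 t, x t' * g (t - t') + x t := by
  rw [← Ico_add_one_right_eq_Icc, sum_Ico_succ_top ht, Nat.sub_self, hg0, mul_one]

/-- `g j s = Pr[S_j > s]` and `q j t' = Pr[𝒳_{j,t'}]`. -/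
theorem stmt17_general (n B : ℕ)
    (x g q : Fin n → ℕ → ℝ) (ε : ℝ) (hε0 : 0 ≤ ε) (hε1 : ε ≤ 1)
    (i : Fin n) (t : ℕ) (ht : t ∈ Icc 1 B)
    (hxnn : ∀ j t', 0 ≤ x j t')
    (hg0 : ∀ j, g j 0 = 1) (hgnn : ∀ j s, 0 ≤ g j s) (hg1 : ∀ j s, g j s ≤ 1)
    -- (P1') of (LP') at time t
    (hload : ∑ j, ∑ t' ∈ Icc 1 t, x j t' * g j (t - t') ≤ 1)
    (hone : ∀ j, ∑ t' ∈ Icc 1 B, x j t' ≤ 1)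
    -- Pr[𝒳_{j,t'}] ≤ (1-ε)·x_{j,t'}/2 + ε/(4Bn)
    (hq : ∀ j t', q j t' ≤ (1 - ε) * x j t' / 2 + ε / (4 * B * n))
    (Free F : ℝ)
    (hF : F = 1 - (∑ t' ∈ Ico 1 t, q i t')
      - ∑ j, ∑ t' ∈ Ico 1 t, q j t' * g j (t - t'))
    (hFree : F ≤ Free) :
    ∑ j, x j t / 2 ≤ Free := by
  obtain ⟨ht1, htB⟩ := mem_Icc.mp ht
  set c := ε / (4 * B * n)
  have hc : 0 ≤ c := by positivity
  have hq' : ∀ j t', q j t' ≤ (1 - ε) / 2 * x j t' + c := fun j t' => by linarith [hq j t']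
  have hslack : (n : ℝ) * (#(Ico 1 t) * c) ≤ ε / 4 :=
    natCast_mul_card_mul_div_le (by rw [Nat.card_Ico]; omega) hε0
  have hslack_i : (#(Ico 1 t) : ℝ) * c ≤ ε / 4 := by
    have : (1 : ℝ) ≤ n := by exact_mod_cast i.pos
    nlinarith [mul_nonneg (Nat.cast_nonneg (α := ℝ) #(Ico 1 t)) hc]
  have hload' : ∑ j, ∑ t' ∈ Ico 1 t, x j t' * g j (t - t') + ∑ j, x j t ≤ 1 := by
    simpa only [sum_Icc_mul_sub_eq_sum_Ico_add (hg0 _) ht1, sum_add_distrib] using hload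
  have hpast_i : ∑ t' ∈ Ico 1 t, x i t' ≤ 1 :=
    (sum_le_sum_of_subset_of_nonneg (Ico_subset_Icc_self.trans (Icc_subset_Icc_right htB))
      fun k _ _ => hxnn i k).trans (hone i)
  have hA : ∑ t' ∈ Ico 1 t, q i t' ≤ (1 - ε) / 2 + ε / 4 := by
    have := sum_le_mul_sum_add_card_mul (Ico 1 t) fun k _ => hq' i k
    nlinarith
  have hC : ∑ j, ∑ t' ∈ Ico 1 t, q j t' * g j (t - t') ≤ (1 - ∑ j, x j t) / 2 + ε / 4 := by
    have := sum_le_mul_sum_add_card_mul univ fun j _ =>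
      sum_mul_le_mul_sum_add_card_mul (Ico 1 t) (fun k _ => hq' j k) hc
        (fun k _ => hgnn j (t - k)) (fun k _ => hg1 j (t - k))
    rw [card_univ, Fintype.card_fin] at this
    have hP : 0 ≤ ∑ j, ∑ t' ∈ Ico 1 t, x j t' * g j (t - t') :=
      sum_nonneg fun j _ => sum_nonneg fun k _ => mul_nonneg (hxnn j k) (hgnn j _)
    nlinarith
  rw [← sum_div]
  linarith

/-- Key inequality of the sampling analysis: with `g j s = Pr[S_j > s]`,
`q j t' = Pr[𝒳_{j,t'}] ≤ (1-ε)x_{j,t'}/2 + ε/(4Bn)` for `t' < t`, LP-feasible `x`, and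
`Free(i,t)` bounded below by the union bound expression `F`, one gets
`Free(i,t) ≥ ∑ⱼ x_{j,t}/2`. -/
theorem stmt17 (n B : ℕ) (hn : 1 ≤ n) (hB : 1 ≤ B)
    (x g q : Fin n → ℕ → ℝ) (ε : ℝ) (hε0 : 0 ≤ ε) (hε1 : ε ≤ 1)
    (i : Fin n) (t : ℕ) (ht : t ∈ Icc 1 B)
    (hxnn : ∀ j t', 0 ≤ x j t')
    (hg0 : ∀ j, g j 0 = 1) (hgnn : ∀ j s, 0 ≤ g j s) (hg1 : ∀ j s, g j s ≤ 1)
    (hqnn : ∀ j t', 0 ≤ q j t')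
    -- (P1') of (LP') at time t
    (hload : ∑ j, ∑ t' ∈ Icc 1 t, x j t' * g j (t - t') ≤ 1)
    (hone : ∀ j, ∑ t' ∈ Icc 1 B, x j t' ≤ 1)
    -- Pr[𝒳_{j,t'}] ≤ (1-ε)·x_{j,t'}/2 + ε/(4Bn)
    (hq : ∀ j t', q j t' ≤ (1 - ε) * x j t' / 2 + ε / (4 * B * n))
    (Free F : ℝ)
    (hF : F = 1 - (∑ t' ∈ Ico 1 t, q i t')
      - ∑ j, ∑ t' ∈ Ico 1 t, q j t' * g j (t - t'))
    (hFree : F ≤ Free) :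
    ∑ j, x j t / 2 ≤ Free :=
  stmt17_general n B x g q ε hε0 hε1 i t ht hxnn hg0 hgnn hg1 hload hone hq Free F hF hFree
end

section
/- In the stochastic knapsack instance with knapsack size 10 and items $I_1$ (size 6 w.p. 1/2, size 1 w.p. 1/2, reward 4), $I_2$ (size 9 deterministically, reward 9), $I_3$ (size 8 w.p. 1/2, size 4 w.p. 1/2, reward 8): the optimal preempting policy achieves expected reward $11.5$, while every policy that may cancel but not preempt achieves expected reward at most $11$. -/
/-
Index the four equiprobable outcomes by the coins of `I₁` and `I₃` (`true` = large size). With `I₁`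
small at most 13 can be collected; with `I₁` large at most 12 (small `I₃`) resp. 9 (large `I₃`).
A policy cannot tell a large `I₃` from a small one before `I₃` has received 4 units, so collecting
12 on (large, small) puts at least 4 units of `I₃` into (large, large), leaving no room for `I₂`
there: the two large-`I₁` outcomes together give at most 20, and the expected reward is at most
(13 + 13 + 20) / 4 = 11.5, which a preempting policy attains.

Without preemption, collecting 12 on (large, small) and 8 on (large, large) forces the policy to
start with `I₃`. While `I₃` runs, `I₁` is untouched, so the small-`I₁` outcomes also begin with
4 resp. 8 units of `I₃`; this leaves no room for `I₂` and caps them at 12. In every case the four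
rewards sum to at most 44.
-/

open Finset

namespace S18

/-- Outcome space: the coin of item `I₁` (size 6 or 1) and the coin of item `I₃`
(size 8 or 4), each fair and independent; four equiprobable outcomes. -/
abbrev Out := Bool × Bool

/-- Realized sizes: item 0 = `I₁` (size 6 w.p. 1/2, size 1 w.p. 1/2),
item 1 = `I₂` (size 9 deterministically), item 2 = `I₃` (size 8 w.p. 1/2,
size 4 w.p. 1/2). -/
def sz (ω : Out) : Fin 3 → ℕ := fun i =>
  if i = 0 then (if ω.1 then 6 else 1)
  else if i = 1 then 9
  else (if ω.2 then 8 else 4)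

/-- Rewards of `I₁, I₂, I₃`. -/
def rw : Fin 3 → ℝ := fun i => if i = 0 then 4 else if i = 1 then 9 else 8

/-- A policy: at each of the 10 time steps (one unit of knapsack capacity each),
which item (if any) receives one unit of processing; this may depend on the outcome
only through what has been observed (adaptedness below). -/
abbrev Policy := ℕ → Out → Option (Fin 3)

/-- Units of processing item `i` has received during the first `t` steps
(only the 10 steps of the knapsack count). -/
def units (a : Policy) (ω : Out) (t : ℕ) (i : Fin 3) : ℕ :=
  ((Finset.range (min t 10)).filter (fun t' => a t' ω = some i)).card

/-- Adaptedness: if two outcomes have produced the same actions and the same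
completion observations up to time `t`, the policy acts identically at time `t`. -/
def Adapted (a : Policy) : Prop :=
  ∀ (ω ω' : Out) (t : ℕ),
    (∀ t' < t, a t' ω = a t' ω') →
    (∀ t' < t, ∀ i : Fin 3,
      (sz ω i ≤ units a ω (t' + 1) i ↔ sz ω' i ≤ units a ω' (t' + 1) i)) →
    a t ω = a t ω'

/-- No preemption (cancelling only): the processing steps devoted to any fixed item
are contiguous — once the policy switches away from an item it never returns. -/
def NoPreempt (a : Policy) : Prop :=
  ∀ (ω : Out) (i : Fin 3) (t₁ t₂ t₃ : ℕ), t₁ ≤ t₂ → t₂ ≤ t₃ →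
    a t₁ ω = some i → a t₃ ω = some i → a t₂ ω = some i

/-- Expected reward: an item pays its reward iff it is fully processed within the
knapsack of size 10; the four outcomes are equiprobable. -/
noncomputable def expReward (a : Policy) : ℝ :=
  (1 / 4 : ℝ) * ∑ ω : Out, ∑ i : Fin 3,
    (if sz ω i ≤ units a ω 10 i then rw i else 0)

end S18

namespace S18

variable {a : Policy} {ω ω' : Out}

lemma units_add_card_idle (a : Policy) (ω : Out) (t : ℕ) :
    units a ω t 0 + units a ω t 1 + units a ω t 2 + #{s ∈ range (min t 10) | a s ω = none} =
      min t 10 := by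
  classical
  have := card_eq_sum_card_fiberwise (f := (a · ω)) (s := range (min t 10)) (t := univ)
    (fun _ _ => mem_univ _)
  rw [card_range, Fintype.sum_option, Fin.sum_univ_three] at this
  simp only [units]
  omega

lemma units_add_le (a : Policy) (ω : Out) (t : ℕ) :
    units a ω t 0 + units a ω t 1 + units a ω t 2 ≤ min t 10 := by
  have := units_add_card_idle a ω t
  omega

lemma units_add_lt_of_eq_none {s t : ℕ} (hs : s < min t 10) (h : a s ω = none) :
    units a ω t 0 + units a ω t 1 + units a ω t 2 < min t 10 := by
  have hidle : 0 < #{s ∈ range (min t 10) | a s ω = none} :=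
    card_pos.2 ⟨s, mem_filter.2 ⟨mem_range.2 hs, h⟩⟩
  have := units_add_card_idle a ω t
  omega

lemma units_mono (a : Policy) (ω : Out) (i : Fin 3) {t t' : ℕ} (h : t ≤ t') :
    units a ω t i ≤ units a ω t' i :=
  card_le_card (filter_subset_filter _ (range_subset_range.2 (by omega)))

lemma le_units_of_forall {i : Fin 3} {k t : ℕ} (hk : k ≤ min t 10)
    (h : ∀ s < k, a s ω = some i) : k ≤ units a ω t i := by
  calc k = #(range k) := (card_range k).symm
    _ ≤ units a ω t i :=
      card_le_card fun s hs => mem_filter.2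
        ⟨mem_range.2 ((mem_range.1 hs).trans_le hk), h s (mem_range.1 hs)⟩

lemma units_eq_zero_of_forall_ne {i : Fin 3} {t : ℕ} (h : ∀ s < t, a s ω ≠ some i) :
    units a ω t i = 0 :=
  card_eq_zero.2 <| filter_eq_empty_iff.2 fun s hs =>
    h s ((mem_range.1 hs).trans_le (min_le_left _ _))

lemma units_congr {t : ℕ} (h : ∀ s < t, a s ω = a s ω') (i : Fin 3) :
    units a ω t i = units a ω' t i :=
  congrArg card <| filter_congr fun s hs => by
    rw [h s ((mem_range.1 hs).trans_le (min_le_left _ _))]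

lemma Adapted.first_eq (ha : Adapted a) (ω ω' : Out) : a 0 ω = a 0 ω' :=
  ha ω ω' 0 (by simp) (by simp)

lemma Adapted.eq_of_units_lt (ha : Adapted a) {j : Fin 3} (hsz : ∀ i ≠ j, sz ω i = sz ω' i)
    {t : ℕ} (ht : units a ω t j < min (sz ω j) (sz ω' j)) : ∀ s ≤ t, a s ω = a s ω' := by
  intro s
  induction s using Nat.strong_induction_on with
  | _ s ih =>
    intro hs
    refine ha ω ω' s (fun r hr => ih r hr (by omega)) fun r hr i => ?_
    rw [← units_congr (fun q hq => ih q (by omega) (by omega)) i]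
    by_cases hij : i = j
    · subst hij
      have := units_mono a ω i (show r + 1 ≤ t by omega)
      omega
    · rw [hsz i hij]

lemma Adapted.le_units_of_le_units (ha : Adapted a) {j : Fin 3}
    (hsz : ∀ i ≠ j, sz ω i = sz ω' i) {m t : ℕ} (hm : m ≤ min (sz ω j) (sz ω' j))
    (h : m ≤ units a ω t j) : m ≤ units a ω' t j := by
  by_contra! h'
  have hagree := ha.eq_of_units_lt (fun i hi => (hsz i hi).symm)
    (h'.trans_le (hm.trans_eq (min_comm _ _)))
  have := units_congr (fun s hs => hagree s hs.le) j
  omega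

lemma NoPreempt.eq_of_lt_units (hnp : NoPreempt a) {i : Fin 3} (h0 : a 0 ω = some i) {s : ℕ}
    (hs : s < units a ω 10 i) : a s ω = some i := by
  by_contra hne
  have hsub : {r ∈ range (min 10 10) | a r ω = some i} ⊆ range s := fun r hr => by
    rw [mem_filter] at hr
    by_contra hrs
    exact hne (hnp ω i 0 s r (Nat.zero_le _) (by simp at hrs; omega) h0 hr.2)
  have := card_le_card hsub
  rw [card_range] at this
  exact absurd hs (not_lt.2 this)

noncomputable def reward (a : Policy) (ω : Out) : ℝ :=
  ∑ i : Fin 3, if sz ω i ≤ units a ω 10 i then rw i else 0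

lemma expReward_eq (a : Policy) :
    expReward a = (reward a (false, false) + reward a (false, true) + reward a (true, false) +
      reward a (true, true)) / 4 := by
  rw [expReward, Fintype.sum_prod_type, Fintype.sum_bool, Fintype.sum_bool, Fintype.sum_bool]
  simp only [reward]
  ring

lemma reward_eq (a : Policy) (ω : Out) :
    reward a ω = (if sz ω 0 ≤ units a ω 10 0 then 4 else 0) +
      (if 9 ≤ units a ω 10 1 then 9 else 0) + (if sz ω 2 ≤ units a ω 10 2 then 8 else 0) := by
  simp [reward, Fin.sum_univ_three, rw, sz]

/-- Process `I₁` for one unit. If it completes, `I₁` was small: fill the remaining 9 units with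
`I₂`. Otherwise preempt `I₁` and give `I₃` 4 units; if `I₃` completes, resume `I₁` for its
remaining 5 units, else give `I₃` its remaining 4 units. -/
def pol : Policy := fun t ω =>
  if 10 ≤ t then none
  else if t = 0 then some 0
  else if ω.1 = false then some 1
  else if t < 5 then some 2
  else if ω.2 = false then some 0
  else if t < 9 then some 2
  else none

lemma adapted_pol : Adapted pol := by
  intro ω ω' t hact hobs
  by_cases ht : 10 ≤ t
  · simp [pol, ht]
  have hfinite : ∀ ω ω' : Out, ∀ t < 10, (∀ t' < t, pol t' ω = pol t' ω') →
      (∀ t' < t, ∀ i : Fin 3,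
        (sz ω i ≤ units pol ω (t' + 1) i ↔ sz ω' i ≤ units pol ω' (t' + 1) i)) →
      pol t ω = pol t ω' := by decide
  exact hfinite ω ω' t (by omega) hact hobs

lemma expReward_pol : expReward pol = 23 / 2 := by
  rw [expReward_eq]
  simp +decide only [reward_eq]
  norm_num

section RewardBounds

variable (a : Policy)

lemma reward_false_le (b : Bool) : reward a (false, b) ≤ 13 := by
  have := units_add_le a (false, b) 10
  cases b <;> simp only [reward_eq, sz] <;> split_ifs <;> norm_num <;> omega

lemma reward_false_le_of_units_lt {b : Bool} (h : units a (false, b) 10 1 < 9) :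
    reward a (false, b) ≤ 12 := by
  have := units_add_le a (false, b) 10
  cases b <;> simp only [reward_eq, sz] <;> split_ifs <;> norm_num <;> omega

lemma reward_true_false_le : reward a (true, false) ≤ 12 := by
  have := units_add_le a (true, false) 10
  simp only [reward_eq, sz]; split_ifs <;> norm_num <;> omega

lemma reward_true_false_le_of_units_lt
    (h : units a (true, false) 10 0 < 6 ∨ units a (true, false) 10 2 < 4) :
    reward a (true, false) ≤ 9 := by
  have := units_add_le a (true, false) 10
  simp only [reward_eq, sz]; split_ifs <;> norm_num <;> omega

lemma reward_true_true_le : reward a (true, true) ≤ 9 := by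
  have := units_add_le a (true, true) 10
  simp only [reward_eq, sz]; split_ifs <;> norm_num <;> omega

lemma reward_true_true_le_of_units_lt (h : units a (true, true) 10 1 < 9) :
    reward a (true, true) ≤ 8 := by
  have := units_add_le a (true, true) 10
  simp only [reward_eq, sz]; split_ifs <;> norm_num <;> omega

lemma reward_true_true_le_of_units_lt_of_units_lt (h₁ : units a (true, true) 10 1 < 9)
    (h₂ : units a (true, true) 10 2 < 8) : reward a (true, true) ≤ 4 := by
  have := units_add_le a (true, true) 10
  simp only [reward_eq, sz]; split_ifs <;> norm_num <;> omega

end RewardBounds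

lemma Adapted.units_true_true_one_lt (ha : Adapted a) (h : 4 ≤ units a (true, false) 10 2) :
    units a (true, true) 10 1 < 9 := by
  have h' := ha.le_units_of_le_units (ω' := (true, true)) (j := 2) (by decide) (by decide) h
  have := units_add_le a (true, true) 10
  omega

lemma Adapted.reward_true_add_le (ha : Adapted a) :
    reward a (true, false) + reward a (true, true) ≤ 20 := by
  by_cases h : 4 ≤ units a (true, false) 10 2
  · linarith [reward_true_false_le a,
      reward_true_true_le_of_units_lt a (ha.units_true_true_one_lt h)]
  · linarith [reward_true_false_le_of_units_lt a (Or.inr (not_le.1 h)), reward_true_true_le a]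

lemma Adapted.expReward_le (ha : Adapted a) : expReward a ≤ 23 / 2 := by
  rw [expReward_eq]
  linarith [reward_false_le a false, reward_false_le a true, ha.reward_true_add_le]

lemma Adapted.eq_false_of_forall_ne (ha : Adapted a) {b : Bool} {k : ℕ}
    (h : ∀ s < k, a s (true, b) ≠ some 0) : ∀ s < k, a s (true, b) = a s (false, b) := by
  intro s hs
  refine ha.eq_of_units_lt (j := 0) (t := k - 1) (by cases b <;> decide) ?_ s (by omega)
  rw [units_eq_zero_of_forall_ne fun r hr => h r (by omega)]
  cases b <;> decide

lemma NoPreempt.first_eq_some_two (ha : Adapted a) (hnp : NoPreempt a)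
    (h₀ : 6 ≤ units a (true, false) 10 0) (h₂ : 4 ≤ units a (true, false) 10 2)
    (h₂' : 8 ≤ units a (true, true) 10 2) : a 0 (true, false) = some 2 := by
  have hsum := units_add_le a (true, false) 10
  rcases h : a 0 (true, false) with _ | i
  · have := units_add_lt_of_eq_none (s := 0) (t := 10) (by norm_num) h
    omega
  obtain rfl | rfl | rfl : i = 0 ∨ i = 1 ∨ i = 2 := by fin_cases i <;> simp
  -- `I₁` would fill steps 0–5, so `I₃` completes on (true, false) only at the last step, and up
  -- to then (true, true) is run identically: it gets just 4 units of `I₃`.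
  · have hI₁ : ∀ s < 6, a s (true, false) = some 0 := fun s hs =>
      hnp.eq_of_lt_units h (by omega)
    have h₀' := le_units_of_forall (t := 9) (by norm_num) hI₁
    have hsum' := units_add_le a (true, false) 9
    have hagree := ha.eq_of_units_lt (ω := (true, false)) (ω' := (true, true)) (j := 2) (t := 9)
      (by decide) (by simp [sz]; omega)
    have := units_congr (fun s hs => hagree s (by omega)) 2 (t := 10)
    omega
  · have := le_units_of_forall (t := 10) (k := 1) (by norm_num) fun s hs => by
      rwa [Nat.lt_one_iff.1 hs]
    omega
  · rfl

lemma NoPreempt.units_false_one_lt (ha : Adapted a) (hnp : NoPreempt a)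
    (h₀ : 6 ≤ units a (true, false) 10 0) (h₂ : 4 ≤ units a (true, false) 10 2)
    (h₂' : 8 ≤ units a (true, true) 10 2) :
    units a (false, false) 10 1 < 9 ∧ units a (false, true) 10 1 < 9 := by
  have hfirst := hnp.first_eq_some_two ha h₀ h₂ h₂'
  have htf : ∀ s < 4, a s (true, false) = some 2 := fun s hs =>
    hnp.eq_of_lt_units hfirst (by omega)
  have htt : ∀ s < 8, a s (true, true) = some 2 := fun s hs =>
    hnp.eq_of_lt_units (ha.first_eq (true, false) _ ▸ hfirst) (by omega)
  have hff := le_units_of_forall (k := 4) (t := 10) (by norm_num) fun s hs =>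
    ha.eq_false_of_forall_ne (b := false) (fun r hr => by simp [htf r hr]) s hs ▸ htf s hs
  have hft := le_units_of_forall (k := 8) (t := 10) (by norm_num) fun s hs =>
    ha.eq_false_of_forall_ne (b := true) (fun r hr => by simp [htt r hr]) s hs ▸ htt s hs
  have := units_add_le a (false, false) 10
  have := units_add_le a (false, true) 10
  omega

lemma NoPreempt.expReward_le (ha : Adapted a) (hnp : NoPreempt a) : expReward a ≤ 11 := by
  rw [expReward_eq]
  by_cases hB : 6 ≤ units a (true, false) 10 0 ∧ 4 ≤ units a (true, false) 10 2
  · have h₁ := ha.units_true_true_one_lt hB.2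
    by_cases hC : 8 ≤ units a (true, true) 10 2
    · obtain ⟨hff, hft⟩ := hnp.units_false_one_lt ha hB.1 hB.2 hC
      linarith [reward_false_le_of_units_lt a hff, reward_false_le_of_units_lt a hft,
        reward_true_false_le a, reward_true_true_le_of_units_lt a h₁]
    · linarith [reward_false_le a false, reward_false_le a true, reward_true_false_le a,
        reward_true_true_le_of_units_lt_of_units_lt a h₁ (not_le.1 hC)]
  · linarith [reward_false_le a false, reward_false_le a true,
      reward_true_false_le_of_units_lt a (by omega), reward_true_true_le a]

end S18

/-- In the knapsack-10 instance with items `I₁` (size 6 or 1 equiprobably, reward 4),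
`I₂` (size 9, reward 9), `I₃` (size 8 or 4 equiprobably, reward 8): the optimal
preempting (adaptive) policy achieves expected reward exactly `11.5`, while every
adaptive policy that may cancel but not preempt achieves expected reward at most `11`. -/
theorem stmt18 :
    (∃ a : S18.Policy, S18.Adapted a ∧ S18.expReward a = 23 / 2) ∧
    (∀ a : S18.Policy, S18.Adapted a → S18.expReward a ≤ 23 / 2) ∧
    (∀ a : S18.Policy, S18.Adapted a → S18.NoPreempt a → S18.expReward a ≤ 11) :=
  ⟨⟨S18.pol, S18.adapted_pol, S18.expReward_pol⟩, fun _ ha => ha.expReward_le,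
    fun _ ha hnp => hnp.expReward_le ha⟩
end

section
/- Let $Y_1, Y_2, Y_3$ be independent non-negative random variables with expectations $\mu_1 \ge \mu_2 \ge \mu_3$, each $\mu_i \le t/6$, $\mu_1+\mu_2+\mu_3 \le t/3$, where $Y_3 = \mu_3$ is constant and $Y_1, Y_2$ each take values in $\{0, t/2 - \mu_3\}$. Then $\Pr[Y_1+Y_2+Y_3 \ge t/2] \le 5/9$. -/
/-!
Put `a = t/2 - μ₃`. Since `Y₂ ≡ μ₃` and `Y₀, Y₁ ∈ {0, a}`, the sum reaches `t/2` exactly on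
`{Y₀ = a} ∪ {Y₁ = a}`, whose probability is `1 - (1 - p)(1 - q)` with `p = μ₁/a`, `q = μ₂/a` by
independence. Writing `s = t/6`, the bounds `μ₁μ₂ ≥ s(μ₁ + μ₂) - s²` and
`μ₁ + μ₂ ≤ a - s` give `(a - μ₁)(a - μ₂) ≥ 2s(a - s)`, which is at least `4a²/9` because
`3s/2 ≤ a ≤ 3s` (the ordering gives `μ₃ ≤ s`).
-/

open MeasureTheory ProbabilityTheory

lemma le_add_iff_eq_or_eq_of_two_valued {c u v : ℝ} (hc : 0 < c) (hu : u = 0 ∨ u = c)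
    (hv : v = 0 ∨ v = c) : c ≤ u + v ↔ u = c ∨ v = c := by
  rcases hu with rfl | rfl <;> rcases hv with rfl | rfl <;> simp [hc.le, hc.not_ge, hc.ne]

lemma integral_eq_measureReal_mul_of_two_valued {Ω : Type*} [MeasurableSpace Ω]
    {μ : Measure Ω} {X : Ω → ℝ} (hX : Measurable X) {c : ℝ} (h : ∀ ω, X ω = 0 ∨ X ω = c) :
    ∫ ω, X ω ∂μ = c * μ.real (X ⁻¹' {c}) := by
  have hX_eq : X = (X ⁻¹' {c}).indicator (fun _ ↦ c) := by
    ext ω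
    by_cases hω : X ω = c
    · simp [hω]
    · simpa [hω] using h ω
  calc ∫ ω, X ω ∂μ = ∫ ω, (X ⁻¹' {c}).indicator (fun _ ↦ c) ω ∂μ := by nth_rw 1 [hX_eq]
    _ = μ.real (X ⁻¹' {c}) * c := integral_indicator_const _ (hX (measurableSet_singleton c))
    _ = c * μ.real (X ⁻¹' {c}) := mul_comm _ _

lemma ProbabilityTheory.IndepSet.measureReal_union {Ω : Type*} [MeasurableSpace Ω] {μ : Measure Ω}
    [IsFiniteMeasure μ] {s t : Set Ω} (h : IndepSet s t μ) (ht : MeasurableSet t) :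
    μ.real (s ∪ t) = μ.real s + μ.real t - μ.real s * μ.real t := by
  have h_inter : μ.real (s ∩ t) = μ.real s * μ.real t := by
    simp only [Measure.real, h.measure_inter_eq_mul, ENNReal.toReal_mul]
  linarith [measureReal_union_add_inter (μ := μ) (s := s) ht]

lemma add_sub_mul_le_five_ninths {t m a p q : ℝ} (ht : 0 < t) (hm : 0 ≤ m) (ha : a = t / 2 - m)
    (hmq : m ≤ a * q) (hqp : a * q ≤ a * p) (hp : a * p ≤ t / 6)
    (hsum : a * p + a * q + m ≤ t / 3) :
    p + q - p * q ≤ 5 / 9 := by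
  set s := t / 6 with hs_def
  have hs : 0 < s := by positivity
  have ha_pos : 0 < a := by linarith
  have key : 4 * a ^ 2 ≤ 9 * (a - a * p) * (a - a * q) := by
    nlinarith [mul_nonneg (sub_nonneg.2 hp) (sub_nonneg.2 (hqp.trans hp)),
      mul_nonneg (by linarith : (0 : ℝ) ≤ a - s - a * p - a * q) (by linarith : (0 : ℝ) ≤ a - s),
      mul_nonneg (by linarith : (0 : ℝ) ≤ 2 * a - 3 * s) (by linarith : (0 : ℝ) ≤ 3 * s - a)]
  have hprod : 4 ≤ 9 * (1 - p) * (1 - q) := by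
    refine le_of_mul_le_mul_left ?_ (pow_pos ha_pos 2)
    linear_combination key
  linarith

theorem stmt19_general {Ω : Type*} [MeasureSpace Ω] [IsProbabilityMeasure (ℙ : Measure Ω)]
    (Y : Fin 3 → Ω → ℝ) (t μ₁ μ₂ μ₃ : ℝ) (ht : 0 < t)
    (hmeas : ∀ i, Measurable (Y i))
    (hind : iIndepFun Y ℙ)
    (hnonneg : ∀ i ω, 0 ≤ Y i ω)
    (hE0 : (∫ ω, Y 0 ω) = μ₁) (hE1 : (∫ ω, Y 1 ω) = μ₂)
    (hord : μ₃ ≤ μ₂ ∧ μ₂ ≤ μ₁)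
    (hbd : μ₁ ≤ t / 6)
    (hsum : μ₁ + μ₂ + μ₃ ≤ t / 3)
    (hconst : ∀ ω, Y 2 ω = μ₃)
    (hval : ∀ ω, (Y 0 ω = 0 ∨ Y 0 ω = t / 2 - μ₃) ∧ (Y 1 ω = 0 ∨ Y 1 ω = t / 2 - μ₃)) :
    ℙ {ω | t / 2 ≤ Y 0 ω + Y 1 ω + Y 2 ω} ≤ ENNReal.ofReal (5 / 9) := by
  obtain ⟨ω₀⟩ := nonempty_of_isProbabilityMeasure (ℙ : Measure Ω)
  have hμ₃ : 0 ≤ μ₃ := hconst ω₀ ▸ hnonneg 2 ω₀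
  set a := t / 2 - μ₃ with ha_def
  have ha : 0 < a := by linarith [hord.1, hord.2]
  have hμ₁ : μ₁ = a * (ℙ : Measure Ω).real (Y 0 ⁻¹' {a}) :=
    hE0 ▸ integral_eq_measureReal_mul_of_two_valued (hmeas 0) fun ω ↦ (hval ω).1
  have hμ₂ : μ₂ = a * (ℙ : Measure Ω).real (Y 1 ⁻¹' {a}) :=
    hE1 ▸ integral_eq_measureReal_mul_of_two_valued (hmeas 1) fun ω ↦ (hval ω).2
  have hevent : {ω | t / 2 ≤ Y 0 ω + Y 1 ω + Y 2 ω} = Y 0 ⁻¹' {a} ∪ Y 1 ⁻¹' {a} := by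
    ext ω
    simp only [Set.mem_ofPred_eq, Set.mem_union, Set.mem_preimage, Set.mem_singleton_iff, hconst ω]
    rw [← le_add_iff_eq_or_eq_of_two_valued ha (hval ω).1 (hval ω).2]
    constructor <;> intro h <;> linarith
  have hindep : IndepSet (Y 0 ⁻¹' {a}) (Y 1 ⁻¹' {a}) ℙ :=
    (indepFun_iff_indepSet_preimage (hmeas 0) (hmeas 1)).1 (hind.indepFun (by decide)) _ _
      (measurableSet_singleton a) (measurableSet_singleton a)
  rw [hevent, ← ofReal_measureReal, hindep.measureReal_union (hmeas 1 (measurableSet_singleton a))]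
  exact ENNReal.ofReal_le_ofReal <| add_sub_mul_le_five_ninths ht hμ₃ ha_def
    (by linarith) (by linarith) (by linarith) (by linarith)

/-- Extremal case `k = 2` of Samuels' configuration: `Y₂ = μ₃` is constant, `Y₀, Y₁`
are independent two-point variables with values in `{0, t/2 - μ₃}` and expectations
`μ₁ ≥ μ₂ ≥ μ₃`, each at most `t/6`, summing to at most `t/3`.  Then
`Pr[Y₀ + Y₁ + Y₂ ≥ t/2] ≤ 5/9`. -/
theorem stmt19 {Ω : Type*} [MeasureSpace Ω] [IsProbabilityMeasure (ℙ : Measure Ω)]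
    (Y : Fin 3 → Ω → ℝ) (t μ₁ μ₂ μ₃ : ℝ) (ht : 0 < t)
    (hmeas : ∀ i, Measurable (Y i))
    (hind : iIndepFun Y ℙ)
    (hnonneg : ∀ i ω, 0 ≤ Y i ω)
    (hint : ∀ i, Integrable (Y i))
    (hE0 : (∫ ω, Y 0 ω) = μ₁) (hE1 : (∫ ω, Y 1 ω) = μ₂) (hE2 : (∫ ω, Y 2 ω) = μ₃)
    (hord : μ₃ ≤ μ₂ ∧ μ₂ ≤ μ₁)
    (hbd : μ₁ ≤ t / 6)
    (hsum : μ₁ + μ₂ + μ₃ ≤ t / 3)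
    (hconst : ∀ ω, Y 2 ω = μ₃)
    (hval : ∀ ω, (Y 0 ω = 0 ∨ Y 0 ω = t / 2 - μ₃) ∧ (Y 1 ω = 0 ∨ Y 1 ω = t / 2 - μ₃)) :
    ℙ {ω | t / 2 ≤ Y 0 ω + Y 1 ω + Y 2 ω} ≤ ENNReal.ofReal (5 / 9) :=
  stmt19_general Y t μ₁ μ₂ μ₃ ht hmeas hind hnonneg hE0 hE1 hord hbd hsum hconst hval
end
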